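/- The function g(θ) = θ + cot(θ)·(1 − (1/3)cos²(θ)) is strictly decreasing on (0, π/2), with g(π/2) = π/2 and g(θ) → +∞ as θ → 0⁺. -/

import Mathlib

open Real

lemma g_hasDerivAt (x : ℝ) (hs : Real.sin x ≠ 0) :
    HasDerivAt (fun θ => θ + (Real.cos θ / Real.sin θ) * (1 - (1 / 3) * Real.cos θ ^ 2))
      (1 + (-Real.sin x * Real.sin x - Real.cos x * Real.cos x) / (Real.sin x) ^ 2 *
        (1 - (1 / 3) * Real.cos x ^ 2) +
        (Real.cos x / Real.sin x) * (-((1 / 3) * (2 * Real.cos x ^ 1 * -Real.sin x)))) x := by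
  have h1 : HasDerivAt (fun θ => Real.cos θ / Real.sin θ)
      ((-Real.sin x * Real.sin x - Real.cos x * Real.cos x) / (Real.sin x) ^ 2) x :=
    (Real.hasDerivAt_cos x).div (Real.hasDerivAt_sin x) hs
  have h2 : HasDerivAt (fun θ => 1 - (1 / 3) * Real.cos θ ^ 2)
      (-((1 / 3) * (2 * Real.cos x ^ 1 * -Real.sin x))) x := by
    have := (((Real.hasDerivAt_cos x).pow 2).const_mul (1 / 3 : ℝ)).const_sub 1
    exact this.congr_deriv (by ring)
  have := (hasDerivAt_id x).add (h1.mul h2)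
  exact this.congr_deriv (by ring)

theorem transcendental_lhs_strictly_decreasing
    (g : ℝ → ℝ)
    (hg : ∀ θ, g θ = θ + (Real.cos θ / Real.sin θ) * (1 - (1 / 3) * Real.cos θ ^ 2)) :
    StrictAntiOn g (Set.Ioo 0 (π / 2)) ∧
      g (π / 2) = π / 2 ∧
      Filter.Tendsto g (nhdsWithin 0 (Set.Ioi 0)) Filter.atTop := by
  have hgfun : g = fun θ => θ + (Real.cos θ / Real.sin θ) * (1 - (1 / 3) * Real.cos θ ^ 2) :=
    funext hg
  refine ⟨?_, ?_, ?_⟩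
  · rw [hgfun]
    apply strictAntiOn_of_deriv_neg (convex_Ioo 0 (π / 2))
    · intro x hx
      have hs : Real.sin x ≠ 0 :=
        (Real.sin_pos_of_pos_of_lt_pi hx.1 (hx.2.trans (by linarith [Real.pi_pos]))).ne'
      exact (g_hasDerivAt x hs).continuousAt.continuousWithinAt
    · intro x hx
      rw [interior_Ioo] at hx
      have hsp : 0 < Real.sin x :=
        Real.sin_pos_of_pos_of_lt_pi hx.1 (hx.2.trans (by linarith [Real.pi_pos]))
      have hcp : 0 < Real.cos x := Real.cos_pos_of_mem_Ioo ⟨by linarith [hx.1, Real.pi_pos], hx.2⟩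
      rw [(g_hasDerivAt x hsp.ne').deriv]
      have hsc := Real.sin_sq_add_cos_sq x
      have h2 : (1 + (-Real.sin x * Real.sin x - Real.cos x * Real.cos x) / (Real.sin x) ^ 2 *
          (1 - (1 / 3) * Real.cos x ^ 2) +
          (Real.cos x / Real.sin x) * (-((1 / 3) * (2 * Real.cos x ^ 1 * -Real.sin x))))
          = -(2 / 3) * Real.cos x ^ 4 / Real.sin x ^ 2 := by
        field_simp
        linear_combination (3 * Real.cos x ^ 2) * hsc
      rw [h2]
      apply div_neg_of_neg_of_pos
      · nlinarith [pow_pos hcp 4]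
      · positivity
  · rw [hg]
    simp [Real.cos_pi_div_two]
  · rw [hgfun]
    have hsin : Filter.Tendsto Real.sin (nhdsWithin 0 (Set.Ioi 0)) (nhdsWithin 0 (Set.Ioi 0)) := by
      apply tendsto_nhdsWithin_of_tendsto_nhds_of_eventually_within
      · simpa using (Real.continuous_sin.tendsto 0).mono_left nhdsWithin_le_nhds
      · filter_upwards [Ioo_mem_nhdsGT_of_mem (by constructor <;> [rfl; exact Real.pi_pos] :
          (0:ℝ) ∈ Set.Ico 0 π)] with θ hθ
        exact Real.sin_pos_of_pos_of_lt_pi hθ.1 hθ.2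
    have hinv : Filter.Tendsto (fun θ => (Real.sin θ)⁻¹) (nhdsWithin 0 (Set.Ioi 0))
        Filter.atTop := tendsto_inv_nhdsGT_zero.comp hsin
    have hcos : Filter.Tendsto Real.cos (nhdsWithin 0 (Set.Ioi 0)) (nhds 1) := by
      simpa using (Real.continuous_cos.tendsto 0).mono_left nhdsWithin_le_nhds
    have hdiv : Filter.Tendsto (fun θ => Real.cos θ / Real.sin θ) (nhdsWithin 0 (Set.Ioi 0))
        Filter.atTop := by
      simp only [div_eq_mul_inv]
      exact hcos.pos_mul_atTop one_pos hinv
    have hfac : Filter.Tendsto (fun θ => 1 - (1 / 3) * Real.cos θ ^ 2)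
        (nhdsWithin 0 (Set.Ioi 0)) (nhds (2 / 3)) := by
      have : Filter.Tendsto (fun θ => 1 - (1 / 3) * Real.cos θ ^ 2)
          (nhdsWithin 0 (Set.Ioi 0)) (nhds (1 - (1 / 3) * 1 ^ 2)) :=
        (tendsto_const_nhds.sub ((tendsto_const_nhds.mul (hcos.pow 2))))
      convert this using 2
      norm_num
    have hmul : Filter.Tendsto (fun θ => (Real.cos θ / Real.sin θ) *
        (1 - (1 / 3) * Real.cos θ ^ 2)) (nhdsWithin 0 (Set.Ioi 0)) Filter.atTop :=
      hdiv.atTop_mul_pos (by norm_num) hfac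
    have hid : Filter.Tendsto (fun θ : ℝ => θ) (nhdsWithin 0 (Set.Ioi 0)) (nhds 0) :=
      (continuous_id.tendsto (0:ℝ)).mono_left nhdsWithin_le_nhds
    exact hid.add_atTop hmul
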